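/- arXiv:1303.1128 — 2 statements merged into one kernel-verified Lean document; each statement's English description precedes it below -/
import Mathlib

section
/- Let (E,g) and (F,d) be Fréchet spaces with translation-invariant metrics, with d a standard metric (translation-invariant with absolutely convex balls). Then D_{g,d}(L,H) := ‖L−H‖_{g,d} defines a translation-invariant metric on the space L_{g,d}(E,F) of linear maps L : E → F with ‖L‖_{g,d} < ∞, making it an Abelian topological group under addition. -/
open Metric

/-- The set of ratios whose supremum is the operator quantity `‖L‖_{g,d}`. -/
def opRatios {E F : Type*} [AddCommGroup E] [Module ℝ E] [MetricSpace E]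
    [AddCommGroup F] [Module ℝ F] [MetricSpace F] (L : E →ₗ[ℝ] F) : Set ℝ :=
  { r | ∃ x : E, x ≠ 0 ∧ r = dist (L x) 0 / dist x 0 }

/-- `‖L‖_{g,d} = sup_{x ≠ 0} dist (L x) 0 / dist x 0`. -/
noncomputable def opN {E F : Type*} [AddCommGroup E] [Module ℝ E] [MetricSpace E]
    [AddCommGroup F] [Module ℝ F] [MetricSpace F] (L : E →ₗ[ℝ] F) : ℝ :=
  sSup (opRatios L)

/-!
For a translation-invariant metric, `d(-y, 0) = d(y, 0)` and `d(a + b, 0) ≤ d(a, 0) + d(b, 0)`.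
Hence `‖·‖_{g,d}` is symmetric under negation and subadditive on maps of finite quantity, i.e. a
group norm on that subgroup, and all the claims follow as for any group norm.
-/

section TranslationInvariant

variable {G : Type*} [AddGroup G] [PseudoMetricSpace G]
  (hG : ∀ x y z : G, dist (x + z) (y + z) = dist x y)
include hG

lemma dist_neg_zero_of_add_right_invariant (y : G) : dist (-y) 0 = dist y 0 := by
  simpa [dist_comm] using (hG (-y) 0 y).symm

lemma dist_add_zero_le_of_add_right_invariant (a b : G) :
    dist (a + b) 0 ≤ dist a 0 + dist b 0 :=
  calc dist (a + b) 0 ≤ dist (a + b) b + dist b 0 := dist_triangle _ _ _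
    _ = dist a 0 + dist b 0 := by rw [← hG a 0 b, zero_add]

end TranslationInvariant

section OperatorQuantity

variable {E F : Type*} [AddCommGroup E] [Module ℝ E] [MetricSpace E]
  [AddCommGroup F] [Module ℝ F] [MetricSpace F]

lemma opN_nonneg (L : E →ₗ[ℝ] F) : 0 ≤ opN L :=
  Real.sSup_nonneg (by rintro r ⟨x, -, rfl⟩; positivity)

lemma dist_apply_zero_le_opN_mul {L : E →ₗ[ℝ] F} (hL : BddAbove (opRatios L)) (x : E) :
    dist (L x) 0 ≤ opN L * dist x 0 := by
  rcases eq_or_ne x 0 with rfl | hx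
  · simp
  · exact (div_le_iff₀ (dist_pos.mpr hx)).1 (le_csSup hL ⟨x, hx, rfl⟩)

lemma mem_upperBounds_opRatios_of_le {L : E →ₗ[ℝ] F} {C : ℝ}
    (h : ∀ x, dist (L x) 0 ≤ C * dist x 0) : C ∈ upperBounds (opRatios L) := by
  rintro r ⟨x, hx, rfl⟩
  exact (div_le_iff₀ (dist_pos.mpr hx)).2 (h x)

lemma opN_le_of_le {L : E →ₗ[ℝ] F} {C : ℝ} (hC : 0 ≤ C)
    (h : ∀ x, dist (L x) 0 ≤ C * dist x 0) : opN L ≤ C :=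
  Real.sSup_le (mem_upperBounds_opRatios_of_le h) hC

lemma bddAbove_opRatios_zero : BddAbove (opRatios (0 : E →ₗ[ℝ] F)) :=
  ⟨0, mem_upperBounds_opRatios_of_le (by simp)⟩

lemma opN_zero : opN (0 : E →ₗ[ℝ] F) = 0 :=
  (opN_le_of_le le_rfl (by simp)).antisymm (opN_nonneg 0)

lemma opN_eq_zero_iff {L : E →ₗ[ℝ] F} (hL : BddAbove (opRatios L)) : opN L = 0 ↔ L = 0 := by
  refine ⟨fun h => LinearMap.ext fun x => ?_, fun h => h ▸ opN_zero⟩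
  simpa [h] using dist_apply_zero_le_opN_mul hL x

variable (hF : ∀ x y z : F, dist (x + z) (y + z) = dist x y)
include hF

lemma opRatios_neg (L : E →ₗ[ℝ] F) : opRatios (-L) = opRatios L := by
  simp only [opRatios, LinearMap.neg_apply, dist_neg_zero_of_add_right_invariant hF]

lemma opN_neg (L : E →ₗ[ℝ] F) : opN (-L) = opN L := by
  rw [opN, opRatios_neg hF, opN]

lemma bddAbove_opRatios_neg {L : E →ₗ[ℝ] F} (hL : BddAbove (opRatios L)) :
    BddAbove (opRatios (-L)) := by
  rwa [opRatios_neg hF]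

lemma dist_add_apply_zero_le {L H : E →ₗ[ℝ] F} (hL : BddAbove (opRatios L))
    (hH : BddAbove (opRatios H)) (x : E) :
    dist ((L + H) x) 0 ≤ (opN L + opN H) * dist x 0 :=
  calc dist ((L + H) x) 0 ≤ dist (L x) 0 + dist (H x) 0 :=
        dist_add_zero_le_of_add_right_invariant hF _ _
    _ ≤ opN L * dist x 0 + opN H * dist x 0 :=
        add_le_add (dist_apply_zero_le_opN_mul hL x) (dist_apply_zero_le_opN_mul hH x)
    _ = (opN L + opN H) * dist x 0 := (add_mul _ _ _).symm

lemma bddAbove_opRatios_add {L H : E →ₗ[ℝ] F} (hL : BddAbove (opRatios L))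
    (hH : BddAbove (opRatios H)) : BddAbove (opRatios (L + H)) :=
  ⟨_, mem_upperBounds_opRatios_of_le (dist_add_apply_zero_le hF hL hH)⟩

lemma opN_add_le {L H : E →ₗ[ℝ] F} (hL : BddAbove (opRatios L))
    (hH : BddAbove (opRatios H)) : opN (L + H) ≤ opN L + opN H :=
  opN_le_of_le (add_nonneg (opN_nonneg L) (opN_nonneg H)) (dist_add_apply_zero_le hF hL hH)

lemma bddAbove_opRatios_sub {L H : E →ₗ[ℝ] F} (hL : BddAbove (opRatios L))
    (hH : BddAbove (opRatios H)) : BddAbove (opRatios (L - H)) :=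
  sub_eq_add_neg L H ▸ bddAbove_opRatios_add hF hL (bddAbove_opRatios_neg hF hH)

lemma opN_sub_comm (L H : E →ₗ[ℝ] F) : opN (L - H) = opN (H - L) := by
  rw [← opN_neg hF, neg_sub]

lemma opN_sub_le_add {L H K : E →ₗ[ℝ] F} (hL : BddAbove (opRatios L))
    (hH : BddAbove (opRatios H)) (hK : BddAbove (opRatios K)) :
    opN (L - K) ≤ opN (L - H) + opN (H - K) :=
  sub_add_sub_cancel L H K ▸
    opN_add_le hF (bddAbove_opRatios_sub hF hL hH) (bddAbove_opRatios_sub hF hH hK)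

lemma opN_add_sub_add_le {L H L' H' : E →ₗ[ℝ] F} (hL : BddAbove (opRatios L))
    (hH : BddAbove (opRatios H)) (hL' : BddAbove (opRatios L'))
    (hH' : BddAbove (opRatios H')) :
    opN (L + H - (L' + H')) ≤ opN (L - L') + opN (H - H') :=
  add_sub_add_comm L H L' H' ▸
    opN_add_le hF (bddAbove_opRatios_sub hF hL hL') (bddAbove_opRatios_sub hF hH hH')

end OperatorQuantity

theorem stmt3_general {E F : Type*} [AddCommGroup E] [Module ℝ E] [MetricSpace E]
    [AddCommGroup F] [Module ℝ F] [MetricSpace F]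
    (hgF : ∀ x y z : F, dist (x + z) (y + z) = dist x y)
    (S : Set (E →ₗ[ℝ] F)) (hS : S = { L | BddAbove (opRatios L) })
    (D : (E →ₗ[ℝ] F) → (E →ₗ[ℝ] F) → ℝ) (hD : ∀ L H, D L H = opN (L - H)) :
    -- subgroup
    ((0 : E →ₗ[ℝ] F) ∈ S ∧ (∀ L ∈ S, ∀ H ∈ S, L + H ∈ S) ∧ (∀ L ∈ S, -L ∈ S)) ∧
    -- metric axioms
    (∀ L ∈ S, ∀ H ∈ S, 0 ≤ D L H) ∧
    (∀ L ∈ S, ∀ H ∈ S, D L H = D H L) ∧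
    (∀ L ∈ S, ∀ H ∈ S, (D L H = 0 ↔ L = H)) ∧
    (∀ L ∈ S, ∀ H ∈ S, ∀ K ∈ S, D L K ≤ D L H + D H K) ∧
    -- translation invariance
    (∀ L ∈ S, ∀ H ∈ S, ∀ K ∈ S, D (L + K) (H + K) = D L H) ∧
    -- continuity of addition
    (∀ L ∈ S, ∀ H ∈ S, ∀ ε : ℝ, 0 < ε → ∃ δ : ℝ, 0 < δ ∧ ∀ L' ∈ S, ∀ H' ∈ S,
      D L L' < δ → D H H' < δ → D (L + H) (L' + H') < ε) ∧
    -- negation is isometric (hence continuous)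
    (∀ L ∈ S, ∀ H ∈ S, D (-L) (-H) = D L H) := by
  subst hS
  simp only [hD, Set.mem_ofPred_eq]
  refine ⟨⟨bddAbove_opRatios_zero, fun L hL H hH => bddAbove_opRatios_add hgF hL hH,
      fun L hL => bddAbove_opRatios_neg hgF hL⟩,
    fun L _ H _ => opN_nonneg _,
    fun L _ H _ => opN_sub_comm hgF L H,
    fun L hL H hH => by rw [opN_eq_zero_iff (bddAbove_opRatios_sub hgF hL hH), sub_eq_zero],
    fun L hL H hH K hK => opN_sub_le_add hgF hL hH hK,
    fun L _ H _ K _ => by rw [add_sub_add_right_eq_sub],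
    fun L hL H hH ε hε => ⟨ε / 2, half_pos hε, fun L' hL' H' hH' h₁ h₂ => ?_⟩,
    fun L _ H _ => by rw [← neg_sub', opN_neg hgF]⟩
  linarith [opN_add_sub_add_le hgF hL hH hL' hH']

/-- For Fréchet spaces `(E,g)`, `(F,d)` with translation-invariant metrics,
`d` standard (absolutely convex balls, complete), `D(L,H) = ‖L - H‖_{g,d}` is a
translation-invariant metric on the set `S` of finite-norm linear maps, and `S` is an
Abelian topological group under addition (it is a subgroup, addition is continuous, and
negation is an isometry for `D`). -/
theorem stmt3 {E F : Type*} [AddCommGroup E] [Module ℝ E] [MetricSpace E] [CompleteSpace E]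
    [AddCommGroup F] [Module ℝ F] [MetricSpace F] [CompleteSpace F]
    (hgE : ∀ x y z : E, dist (x + z) (y + z) = dist x y)
    (hgF : ∀ x y z : F, dist (x + z) (y + z) = dist x y)
    (hball : ∀ r : ℝ, 0 < r → Convex ℝ (Metric.ball (0 : F) r) ∧ Balanced ℝ (Metric.ball (0 : F) r))
    (S : Set (E →ₗ[ℝ] F)) (hS : S = { L | BddAbove (opRatios L) })
    (D : (E →ₗ[ℝ] F) → (E →ₗ[ℝ] F) → ℝ) (hD : ∀ L H, D L H = opN (L - H)) :
    -- subgroup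
    ((0 : E →ₗ[ℝ] F) ∈ S ∧ (∀ L ∈ S, ∀ H ∈ S, L + H ∈ S) ∧ (∀ L ∈ S, -L ∈ S)) ∧
    -- metric axioms
    (∀ L ∈ S, ∀ H ∈ S, 0 ≤ D L H) ∧
    (∀ L ∈ S, ∀ H ∈ S, D L H = D H L) ∧
    (∀ L ∈ S, ∀ H ∈ S, (D L H = 0 ↔ L = H)) ∧
    (∀ L ∈ S, ∀ H ∈ S, ∀ K ∈ S, D L K ≤ D L H + D H K) ∧
    -- translation invariance
    (∀ L ∈ S, ∀ H ∈ S, ∀ K ∈ S, D (L + K) (H + K) = D L H) ∧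
    -- continuity of addition
    (∀ L ∈ S, ∀ H ∈ S, ∀ ε : ℝ, 0 < ε → ∃ δ : ℝ, 0 < δ ∧ ∀ L' ∈ S, ∀ H' ∈ S,
      D L L' < δ → D H H' < δ → D (L + H) (L' + H') < ε) ∧
    -- negation is isometric (hence continuous)
    (∀ L ∈ S, ∀ H ∈ S, D (-L) (-H) = D L H) :=
  stmt3_general hgF S hS D hD
end

section
/- Let (F,d) be a Fréchet space with a complete translation-invariant metric d with absolutely convex balls, U ⊆ F open, and ξ : U → F a map which is bounded by R in operator behavior and Lipschitz in the sense that ‖ξ(x)−ξ(y)‖_d ≤ R‖x−y‖_d on a closed ball B̄_r(p_0) ⊆ U, with ‖ξ(p)‖_d ≤ L on B̄_r(p_0). Let m = min{1/R, r/L} and t_0 ∈ ℝ. Then the Picard iteration ℓ_0(t) = p_0, ℓ_{n+1}(t) = p_0 + ∫_{t_0}^t ξ(ℓ_n(u)) du satisfies ℓ_n(t) ∈ B̄_r(p_0) for all n and all t ∈ [t_0−m, t_0+m]. -/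
open Metric Set

/-! Induction on `n`: if `ℓ n` stays in `B̄_r(p₀)` on `[t₀ - m, t₀ + m]`, then `ξ ∘ ℓ n` is bounded
by `L` there, so the integral estimate puts `ℓ (n + 1) t` within `|t - t₀| · L ≤ m · L ≤ r` of `p₀`. -/

section PicardIterates

variable {F : Type*} [AddCommGroup F] [MetricSpace F]

lemma dist_add_self_left_of_translation_invariant
    (htrans : ∀ x y z : F, dist (x + z) (y + z) = dist x y) (p v : F) :
    dist (p + v) p = dist v 0 := by
  simpa [add_comm] using htrans v 0 p

variable (htrans : ∀ x y z : F, dist (x + z) (y + z) = dist x y)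
  {ξ : F → F} {p₀ : F} {L r m t₀ : ℝ} {Int : (ℝ → F) → ℝ → ℝ → F}
  (hbd : ∀ p ∈ closedBall p₀ r, dist (ξ p) 0 ≤ L)
  (hIntEst : ∀ (c : ℝ → F) (a b C : ℝ),
    (∀ u ∈ uIcc a b, dist (c u) 0 ≤ C) → dist (Int c a b) 0 ≤ |b - a| * C)
include htrans hbd hIntEst

lemma picard_step_mem_closedBall (hL : 0 ≤ L) (hmL : m * L ≤ r) {γ : ℝ → F}
    (hγ : ∀ u, |u - t₀| ≤ m → γ u ∈ closedBall p₀ r) {t : ℝ} (ht : |t - t₀| ≤ m) :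
    p₀ + Int (fun u => ξ (γ u)) t₀ t ∈ closedBall p₀ r := by
  have hξγ : ∀ u ∈ uIcc t₀ t, dist (ξ (γ u)) 0 ≤ L := fun u hu =>
    hbd _ (hγ u ((abs_sub_left_of_mem_uIcc hu).trans ht))
  rw [mem_closedBall, dist_add_self_left_of_translation_invariant htrans]
  calc dist (Int (fun u => ξ (γ u)) t₀ t) 0 ≤ |t - t₀| * L := hIntEst _ _ _ _ hξγ
    _ ≤ m * L := mul_le_mul_of_nonneg_right ht hL
    _ ≤ r := hmL

theorem picard_iterate_mem_closedBall (hL : 0 ≤ L) (hr : 0 ≤ r) (hmL : m * L ≤ r)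
    {ℓ : ℕ → ℝ → F} (hℓ0 : ∀ t, ℓ 0 t = p₀)
    (hℓrec : ∀ n t, ℓ (n + 1) t = p₀ + Int (fun u => ξ (ℓ n u)) t₀ t) (n : ℕ) :
    ∀ t, |t - t₀| ≤ m → ℓ n t ∈ closedBall p₀ r := by
  induction n with
  | zero => intro t _; simpa [hℓ0] using hr
  | succ n ih =>
    intro t ht
    rw [hℓrec]
    exact picard_step_mem_closedBall htrans hbd hIntEst hL hmL ih ht

end PicardIterates

theorem stmt9_general {F : Type*} [AddCommGroup F] [MetricSpace F]
    (htrans : ∀ x y z : F, dist (x + z) (y + z) = dist x y)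
    (ξ : F → F) (p₀ : F) (R L r : ℝ)
    (hL : 0 < L) (hr : 0 < r)
    (hbd : ∀ p ∈ Metric.closedBall p₀ r, dist (ξ p) 0 ≤ L)
    (m : ℝ) (hm : m = min (1 / R) (r / L)) (t₀ : ℝ)
    (Int : (ℝ → F) → ℝ → ℝ → F)
    (hIntEst : ∀ (c : ℝ → F) (a b C : ℝ),
      (∀ u ∈ Set.uIcc a b, dist (c u) 0 ≤ C) → dist (Int c a b) 0 ≤ |b - a| * C)
    (ℓ : ℕ → ℝ → F) (hℓ0 : ∀ t, ℓ 0 t = p₀)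
    (hℓrec : ∀ n t, ℓ (n + 1) t = p₀ + Int (fun u => ξ (ℓ n u)) t₀ t) :
    ∀ n : ℕ, ∀ t ∈ Set.Icc (t₀ - m) (t₀ + m), ℓ n t ∈ Metric.closedBall p₀ r := by
  have hmL : m * L ≤ r := (le_div_iff₀ hL).mp (hm ▸ min_le_right _ _)
  intro n t ht
  refine picard_iterate_mem_closedBall htrans hbd hIntEst hL.le hr.le hmL hℓ0 hℓrec n t ?_
  rwa [abs_sub_comm, mem_Icc_iff_abs_le]

/-- Picard iterates stay in the closed ball.  `(F,d)` is a Fréchet space with a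
complete translation-invariant metric with absolutely convex balls, `ξ` is `R`-Lipschitz and
bounded by `L` on the closed ball `B̄_r(p₀) ⊆ U`, `m = min (1/R) (r/L)`, and `Int c a b`
denotes the Riemann integral `∫_a^b c(u) du`, satisfying the standard estimate
`‖∫_a^b c‖_d ≤ |b-a| · sup ‖c‖_d`.  Then the iterates
`ℓ₀(t) = p₀`, `ℓ_{n+1}(t) = p₀ + ∫_{t₀}^t ξ(ℓ_n(u)) du` lie in `B̄_r(p₀)` for all `n` and
all `t ∈ [t₀ - m, t₀ + m]`. -/
theorem stmt9 {F : Type*} [AddCommGroup F] [Module ℝ F] [MetricSpace F] [CompleteSpace F]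
    (htrans : ∀ x y z : F, dist (x + z) (y + z) = dist x y)
    (hball : ∀ ρ : ℝ, 0 < ρ → Convex ℝ (Metric.ball (0 : F) ρ) ∧ Balanced ℝ (Metric.ball (0 : F) ρ))
    (U : Set F) (hU : IsOpen U) (ξ : F → F) (p₀ : F) (R L r : ℝ)
    (hR : 0 < R) (hL : 0 < L) (hr : 0 < r)
    (hUB : Metric.closedBall p₀ r ⊆ U)
    (hLip : ∀ x ∈ Metric.closedBall p₀ r, ∀ y ∈ Metric.closedBall p₀ r,
      dist (ξ x) (ξ y) ≤ R * dist x y)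
    (hbd : ∀ p ∈ Metric.closedBall p₀ r, dist (ξ p) 0 ≤ L)
    (m : ℝ) (hm : m = min (1 / R) (r / L)) (t₀ : ℝ)
    (Int : (ℝ → F) → ℝ → ℝ → F)
    (hIntEst : ∀ (c : ℝ → F) (a b C : ℝ),
      (∀ u ∈ Set.uIcc a b, dist (c u) 0 ≤ C) → dist (Int c a b) 0 ≤ |b - a| * C)
    (ℓ : ℕ → ℝ → F) (hℓ0 : ∀ t, ℓ 0 t = p₀)
    (hℓrec : ∀ n t, ℓ (n + 1) t = p₀ + Int (fun u => ξ (ℓ n u)) t₀ t) :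
    ∀ n : ℕ, ∀ t ∈ Set.Icc (t₀ - m) (t₀ + m), ℓ n t ∈ Metric.closedBall p₀ r :=
  stmt9_general htrans ξ p₀ R L r hL hr hbd m hm t₀ Int hIntEst ℓ hℓ0 hℓrec
end
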